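/- Let C be a strict monoidal category with exactly one object, and S a complete semiring. Then for any elements a, b, c, d ∈ Q_S(C) such that b or c takes values in the center of S, the multiplicative compatibility relation (a × b) · (c × d) = (a · c) × (b · d) holds in Q_S(C), where · is the composition convolution product and × is the monoidal convolution product. -/

import Mathlib

/-- A complete (additive, commutative) monoid in the sense of Eilenberg: a commutative
monoid equipped with a summation law over arbitrary index sets, extending finite sums
and satisfying the partition axiom. -/
class CompleteAddMonoid (M : Type) [AddCommMonoid M] where
  csum : {I : Type} → (I → M) → M
  csum_empty : ∀ {I : Type} [IsEmpty I] (f : I → M), csum f = 0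
  csum_unique : ∀ {I : Type} [Unique I] (f : I → M), csum f = f default
  csum_pair : ∀ (f : Bool → M), csum f = f true + f false
  csum_partition : ∀ {I J : Type} (p : I → J) (f : I → M),
    csum (fun j : J => csum (fun i : {i : I // p i = j} => f i.1)) = csum f

/-- A complete semiring: a semiring whose additive monoid is complete and where
multiplication distributes over infinite sums from both sides. -/
class CompleteSemiring (S : Type) [Semiring S] extends CompleteAddMonoid S where
  csum_mul_left : ∀ {I : Type} (s : S) (f : I → S),
    s * csum f = csum (fun i => s * f i)
  csum_mul_right : ∀ {I : Type} (s : S) (f : I → S),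
    csum f * s = csum (fun i => f i * s)

open CompleteAddMonoid

open CategoryTheory

open scoped Classical

/-- The set of all morphisms of a small category, as a type. -/
def Mor (C : Type) [SmallCategory C] : Type := Σ X Y : C, X ⟶ Y

/-- A strict monoidal structure on a small category `C`: a tensor product on objects
and morphisms which is strictly associative and strictly unital, together with the
interchange law making it a bifunctor. -/
structure StrictMonoidalStruct (C : Type) [SmallCategory C] where
  tO : C → C → C
  unit : C
  tH : {X Y X' Y' : C} → (X ⟶ Y) → (X' ⟶ Y') → (tO X X' ⟶ tO Y Y')
  assocO : ∀ X Y Z : C, tO (tO X Y) Z = tO X (tO Y Z)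
  unitO_left : ∀ X : C, tO unit X = X
  unitO_right : ∀ X : C, tO X unit = X
  assocH : ∀ {X Y X' Y' X'' Y'' : C} (f : X ⟶ Y) (g : X' ⟶ Y') (h : X'' ⟶ Y''),
    HEq (tH (tH f g) h) (tH f (tH g h))
  unitH_left : ∀ {X Y : C} (f : X ⟶ Y), HEq (tH (𝟙 unit) f) f
  unitH_right : ∀ {X Y : C} (f : X ⟶ Y), HEq (tH f (𝟙 unit)) f
  id_tensor_id : ∀ X Y : C, tH (𝟙 X) (𝟙 Y) = 𝟙 (tO X Y)
  interchange : ∀ {X Y Z X' Y' Z' : C} (f : X ⟶ Y) (g : Y ⟶ Z) (f' : X' ⟶ Y') (g' : Y' ⟶ Z'),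
    tH (f ≫ g) (f' ≫ g') = tH f f' ≫ tH g g'

/-- The tensor product of two morphisms, at the level of the set `Mor C`. -/
def StrictMonoidalStruct.tMor {C : Type} [SmallCategory C]
    (M : StrictMonoidalStruct C) (m m' : Mor C) : Mor C :=
  ⟨M.tO m.1 m'.1, M.tO m.2.1 m'.2.1, M.tH m.2.2 m'.2.2⟩

/-- The composition convolution product on `Q_S(C)`:
`(f · g)(γ) = ∑_{β ∘ α = γ} g(β) · f(α)`. -/
noncomputable def convC {S : Type} [Semiring S] [CompleteSemiring S]
    {C : Type} [SmallCategory C] (f g : Mor C → S) : Mor C → S :=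
  fun γ => csum (fun t : Σ Z : C, {p : (γ.1 ⟶ Z) × (Z ⟶ γ.2.1) // p.1 ≫ p.2 = γ.2.2} =>
    g ⟨t.1, γ.2.1, t.2.1.2⟩ * f ⟨γ.1, t.1, t.2.1.1⟩)

/-- The monoidal convolution product on `Q_S(C)`:
`(f × g)(γ) = ∑_{α ⊗ β = γ} g(β) · f(α)`. -/
noncomputable def convM {S : Type} [Semiring S] [CompleteSemiring S]
    {C : Type} [SmallCategory C] (M : StrictMonoidalStruct C)
    (f g : Mor C → S) : Mor C → S :=
  fun γ => csum (fun t : {p : Mor C × Mor C // M.tMor p.1 p.2 = γ} =>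
    g t.1.2 * f t.1.1)


/-!
With a single object `u`, `Mor C` is in bijection with `u ⟶ u`, and both convolutions become
convolutions `(F ⋆ G)(z) = ∑_{op p q = z} G q · F p` over binary operations on `u ⟶ u`:
composition, and the tensor product transported along `eqToHom`. Expanding both sides of the
identity gives sums over quadruples `(p, q, x, y)` with `(p ⊗ q) ≫ (x ⊗ y) = γ`, resp.
`(p ≫ q) ⊗ (x ≫ y) = γ`; the interchange law matches them by swapping `q` and `x`, and the
summands `d·c·b·a` and `d·b·c·a` then agree because the values of `b` and `c` commute.
-/

section CompleteSums

variable {M : Type} [AddCommMonoid M] [CompleteAddMonoid M]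

theorem Equiv.csum_eq {I J : Type} (e : I ≃ J) (f : J → M) :
    csum (fun i => f (e i)) = csum f := by
  rw [← csum_partition e (fun i => f (e i))]
  congr 1
  funext j
  have : Unique {i : I // e i = j} :=
    ⟨⟨⟨e.symm j, e.apply_symm_apply j⟩⟩, fun i => Subtype.ext (e.eq_symm_apply.mpr i.2)⟩
  rw [csum_unique]
  exact congrArg f (default : {i : I // e i = j}).2

theorem csum_sigma {I : Type} {T : I → Type} (f : (Σ i, T i) → M) :
    csum (fun i => csum (fun t : T i => f ⟨i, t⟩)) = csum f := by
  rw [← csum_partition Sigma.fst f]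
  congr 1
  funext i
  let e : T i ≃ {x : Σ i, T i // x.1 = i} :=
    { toFun := fun t => ⟨⟨i, t⟩, rfl⟩
      invFun := fun x => x.2 ▸ x.1.2
      left_inv := fun _ => rfl
      right_inv := by rintro ⟨⟨j, t⟩, rfl⟩; rfl }
  exact e.csum_eq (fun x => f x.1)

end CompleteSums

theorem csum_mul_csum {S : Type} [Semiring S] [CompleteSemiring S] {I J : Type}
    (f : I → S) (g : J → S) :
    csum f * csum g = csum (fun p : I × J => f p.1 * g p.2) := by
  rw [CompleteSemiring.csum_mul_right]
  simp only [CompleteSemiring.csum_mul_left]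
  exact (csum_sigma (fun p : Σ _ : I, J => f p.1 * g p.2)).trans
    ((Equiv.sigmaEquivProd I J).symm.csum_eq _).symm

section MagmaConvolution

variable {S : Type} [Semiring S] [CompleteSemiring S] {E : Type}

def Factorization (op : E → E → E) (z : E) : Type :=
  {p : E × E // op p.1 p.2 = z}

def Factorization₂ (outer inner : E → E → E) (z : E) : Type :=
  {w : (E × E) × (E × E) // outer (inner w.1.1 w.1.2) (inner w.2.1 w.2.2) = z}

noncomputable def magmaConv (op : E → E → E) (F G : E → S) : E → S :=
  fun z => csum (fun t : Factorization op z => G t.1.2 * F t.1.1)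

def factorizationSigmaEquiv (outer inner : E → E → E) (z : E) :
    (Σ t : Factorization outer z, Factorization inner t.1.2 × Factorization inner t.1.1) ≃
      Factorization₂ outer inner z where
  toFun y := ⟨(y.2.2.1, y.2.1.1), by rw [y.2.2.2, y.2.1.2]; exact y.1.2⟩
  invFun w := ⟨⟨(inner w.1.1.1 w.1.1.2, inner w.1.2.1 w.1.2.2), w.2⟩, ⟨w.1.2, rfl⟩, ⟨w.1.1, rfl⟩⟩
  left_inv := by
    rintro ⟨⟨⟨α, β⟩, h⟩, ⟨⟨x, y⟩, hxy⟩, ⟨⟨p, q⟩, hpq⟩⟩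
    dsimp only at hxy hpq
    subst hxy hpq
    rfl
  right_inv _ := rfl

theorem magmaConv_magmaConv_apply (outer inner : E → E → E) (F G H K : E → S) (z : E) :
    magmaConv outer (magmaConv inner F G) (magmaConv inner H K) z =
      csum (fun w : Factorization₂ outer inner z =>
        (K w.1.2.2 * H w.1.2.1) * (G w.1.1.2 * F w.1.1.1)) := by
  simp only [magmaConv, csum_mul_csum]
  rw [csum_sigma (fun y : Σ t : Factorization outer z,
      Factorization inner t.1.2 × Factorization inner t.1.1 =>
    (K y.2.1.1.2 * H y.2.1.1.1) * (G y.2.2.1.2 * F y.2.2.1.1))]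
  exact ((factorizationSigmaEquiv outer inner z).symm.csum_eq _).symm

def factorization₂InterchangeEquiv (comp tens : E → E → E)
    (interchange : ∀ p q x y, tens (comp p x) (comp q y) = comp (tens p q) (tens x y))
    (z : E) : Factorization₂ comp tens z ≃ Factorization₂ tens comp z :=
  (Equiv.prodProdProdComm E E E E).subtypeEquiv fun w => by
    simp [Equiv.prodProdProdComm, interchange]

theorem magmaConv_interchange (comp tens : E → E → E)
    (interchange : ∀ p q x y, tens (comp p x) (comp q y) = comp (tens p q) (tens x y))
    (F G H K : E → S) (hGH : ∀ x y, H x * G y = G y * H x) :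
    magmaConv comp (magmaConv tens F G) (magmaConv tens H K) =
      magmaConv tens (magmaConv comp F H) (magmaConv comp G K) := by
  funext z
  rw [magmaConv_magmaConv_apply, magmaConv_magmaConv_apply,
    ← (factorization₂InterchangeEquiv comp tens interchange z).csum_eq]
  congr 1
  funext w
  obtain ⟨⟨⟨p, q⟩, x, y⟩, hw⟩ := w
  show (K y * H x) * (G q * F p) = (K y * G q) * (H x * F p)
  simp only [mul_assoc]
  rw [← mul_assoc (H x), hGH, mul_assoc]

theorem magmaConv_comp_equiv {E' : Type} (e : E ≃ E') (op : E' → E' → E') (F G : E' → S) :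
    magmaConv op F G ∘ e =
      magmaConv (fun x y => e.symm (op (e x) (e y))) (F ∘ e) (G ∘ e) := by
  funext z
  let eFac : Factorization (fun x y => e.symm (op (e x) (e y))) z ≃ Factorization op (e z) :=
    (e.prodCongr e).subtypeEquiv fun _ => e.symm_apply_eq
  exact (eFac.csum_eq fun t => G t.1.2 * F t.1.1).symm

end MagmaConvolution

theorem convM_eq_magmaConv {S : Type} [Semiring S] [CompleteSemiring S] {C : Type}
    [SmallCategory C] (M : StrictMonoidalStruct C) (f g : Mor C → S) :
    convM M f g = magmaConv M.tMor f g :=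
  rfl

section OneObject

variable {C : Type} [SmallCategory C] {u : C} (hone : ∀ X : C, X = u)

def toEnd {X Y : C} (f : X ⟶ Y) : u ⟶ u :=
  eqToHom (hone X).symm ≫ f ≫ eqToHom (hone Y)

theorem toEnd_comp {X Y Z : C} (f : X ⟶ Y) (g : Y ⟶ Z) :
    toEnd hone (f ≫ g) = toEnd hone f ≫ toEnd hone g := by
  simp [toEnd]

theorem toEnd_self (f : u ⟶ u) : toEnd hone f = f := by
  simp [toEnd]

def endEquivMor : (u ⟶ u) ≃ Mor C where
  toFun f := ⟨u, u, f⟩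
  invFun m := toEnd hone m.2.2
  left_inv := toEnd_self hone
  right_inv := by
    rintro ⟨X, Y, f⟩
    obtain rfl := hone X
    obtain rfl := hone Y
    show (⟨_, _, toEnd hone f⟩ : Mor C) = ⟨_, _, f⟩
    rw [toEnd_self]

theorem convC_comp_endEquivMor {S : Type} [Semiring S] [CompleteSemiring S] (f g : Mor C → S) :
    convC f g ∘ endEquivMor hone =
      magmaConv (· ≫ ·) (f ∘ endEquivMor hone) (g ∘ endEquivMor hone) := by
  funext x
  have hbij : Function.Bijective fun p : Factorization (· ≫ ·) x =>
      (⟨u, p⟩ : Σ Z : C, {p : (u ⟶ Z) × (Z ⟶ u) // p.1 ≫ p.2 = x}) := by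
    refine ⟨fun p q h => eq_of_heq (Sigma.mk.inj h).2, ?_⟩
    rintro ⟨Z, p⟩
    obtain rfl := hone Z
    exact ⟨p, rfl⟩
  exact ((Equiv.ofBijective _ hbij).csum_eq _).symm

def endTensor (M : StrictMonoidalStruct C) (x y : u ⟶ u) : u ⟶ u :=
  toEnd hone (M.tH x y)

theorem endTensor_comp_comp (M : StrictMonoidalStruct C) (p q x y : u ⟶ u) :
    endTensor hone M (p ≫ x) (q ≫ y) = endTensor hone M p q ≫ endTensor hone M x y := by
  rw [endTensor, M.interchange, toEnd_comp]
  rfl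

end OneObject

/-- If the strict monoidal category `C` has exactly one object, then for elements
`a, b, c, d` of `Q_S(C)` such that `b` or `c` maps entirely into the center of `S`, the
multiplicative compatibility relation `(a × b) · (c × d) = (a · c) × (b · d)` holds. -/
theorem mult_compat_one_object (S : Type) [Semiring S] [CompleteSemiring S]
    (C : Type) [SmallCategory C] (M : StrictMonoidalStruct C)
    (hone : ∀ X : C, X = M.unit)
    (a b c d : Mor C → S)
    (hcenter : (∀ (γ : Mor C) (s : S), b γ * s = s * b γ) ∨
               (∀ (γ : Mor C) (s : S), c γ * s = s * c γ)) :
    convC (convM M a b) (convM M c d) = convM M (convC a c) (convC b d) := by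
  let e := endEquivMor hone
  have hconvC : ∀ f g : Mor C → S,
      convC f g ∘ e = magmaConv (· ≫ ·) (f ∘ e) (g ∘ e) :=
    convC_comp_endEquivMor hone
  have hconvM : ∀ f g : Mor C → S,
      convM M f g ∘ e = magmaConv (endTensor hone M) (f ∘ e) (g ∘ e) := fun f g => by
    rw [convM_eq_magmaConv]
    exact magmaConv_comp_equiv e M.tMor f g
  have hcomm : ∀ x y, (c ∘ e) x * (b ∘ e) y = (b ∘ e) y * (c ∘ e) x := by
    rcases hcenter with hb | hc
    · exact fun x y => (hb _ _).symm
    · exact fun x y => hc _ _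
  apply e.surjective.injective_comp_right
  simp only [hconvC, hconvM]
  exact magmaConv_interchange _ _ (endTensor_comp_comp hone M) _ _ _ _ hcomm
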